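/- Let n ≥ 2 and define K₁(t,x,y) = (n/π^{n/2}) t e^{−nt} (1 − e^{−2t})^{−(n+2)/2} exp(−|y − e^{−t}x|²/(1 − e^{−2t})) e^{|y|² − |x|²}. There exists C > 0 such that for all (x,y) ∈ N^c with x ≠ 0 and y ≠ 0, sup_{t>0} K₁(t,x,y) ≤ C e^{|y|² − |x|²} [ |x|^{1−n} + e^{−|y_⊥|²} (|y|/|x|)^{n−1} |x| · χ_{{|y| ≤ 2|x|}} + min((1 + |x|)^n, (|x| sin θ(x,y))^{−n}) ], where y_⊥ = y − (⟨x,y⟩/|x|²) x and θ(x,y) is the angle between x and y, so sin θ(x,y) = |y_⊥|/|y|. -/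

import Mathlib

open MeasureTheory Real
open scoped ENNReal RealInnerProductSpace

/-- The local region `N = {(x,y) : |x-y| ≤ min(1, 1/|x|)}`. -/
def localN (n : ℕ) : Set (EuclideanSpace ℝ (Fin n) × EuclideanSpace ℝ (Fin n)) :=
  {p | ‖p.1 - p.2‖ ≤ 1 ∧ ‖p.1 - p.2‖ * ‖p.1‖ ≤ 1}

/-- The kernel `K₁(t,x,y)`, the first term of `t ∂_t T_t^𝒜(x,y)`. -/
noncomputable def K1 (n : ℕ) (t : ℝ) (x y : EuclideanSpace ℝ (Fin n)) : ℝ :=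
  ((n : ℝ) / Real.pi ^ ((n : ℝ) / 2)) * t * Real.exp (-(n : ℝ) * t) *
    (1 - Real.exp (-2 * t)) ^ (-((n : ℝ) + 2) / 2) *
    Real.exp (-‖y - Real.exp (-t) • x‖ ^ 2 / (1 - Real.exp (-2 * t))) *
    Real.exp (‖y‖ ^ 2 - ‖x‖ ^ 2)

/-- The component of `y` orthogonal to `x`: `y_⊥ = y - (⟨x,y⟩/|x|²) x`. -/
noncomputable def yPerp (n : ℕ) (x y : EuclideanSpace ℝ (Fin n)) : EuclideanSpace ℝ (Fin n) :=
  y - ((⟪x, y⟫ : ℝ) / ‖x‖ ^ 2) • x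

/-- `min((1+|x|)ⁿ, (|x| sin θ(x,y))⁻ⁿ)`, interpreted as `(1+|x|)ⁿ` when `sin θ(x,y) = 0`
(since then `(|x| sin θ)⁻ⁿ = +∞`); here `sin θ(x,y) = |y_⊥|/|y|`. -/
noncomputable def minTerm (n : ℕ) (x y : EuclideanSpace ℝ (Fin n)) : ℝ :=
  if ‖yPerp n x y‖ = 0 then (1 + ‖x‖) ^ n
  else min ((1 + ‖x‖) ^ n) ((‖x‖ * (‖yPerp n x y‖ / ‖y‖)) ^ (-(n : ℝ)))


section Helpers

private lemma pow_mul_exp_neg_sq_le (m : ℕ) {r : ℝ} (hr : 0 ≤ r) :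
    r ^ m * Real.exp (-r ^ 2) ≤ (m.factorial : ℝ) := by
  have hf : (1:ℝ) ≤ m.factorial := by exact_mod_cast m.factorial_pos
  have hepos := Real.exp_pos (r ^ 2)
  have hinv : Real.exp (-r ^ 2) * Real.exp (r ^ 2) = 1 := by
    rw [← Real.exp_add]; simp
  rcases le_total r 1 with h | h
  · have h1 : r ^ m ≤ 1 := pow_le_one₀ hr h
    have h2 : Real.exp (-r ^ 2) ≤ 1 := Real.exp_le_one_iff.mpr (by nlinarith [sq_nonneg r])
    nlinarith [Real.exp_pos (-r ^ 2)]
  · have h1 : r ^ m ≤ (r ^ 2) ^ m := by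
      apply pow_le_pow_left₀ hr
      nlinarith
    have h2 : (r ^ 2) ^ m / m.factorial ≤ Real.exp (r ^ 2) := by
      exact Real.pow_div_factorial_le_exp (x := r ^ 2) (by positivity) m
    have h3 : (r ^ 2) ^ m ≤ m.factorial * Real.exp (r ^ 2) := by
      rw [div_le_iff₀ (by positivity)] at h2; linarith [h2]
    calc r ^ m * Real.exp (-r ^ 2) ≤ (r ^ 2) ^ m * Real.exp (-r ^ 2) := by
          apply mul_le_mul_of_nonneg_right h1 (Real.exp_pos _).le
      _ ≤ (m.factorial * Real.exp (r ^ 2)) * Real.exp (-r ^ 2) := by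
          apply mul_le_mul_of_nonneg_right h3 (Real.exp_pos _).le
      _ = m.factorial := by rw [mul_assoc, mul_comm (Real.exp (r^2)), hinv, mul_one]

private lemma inv_pow_mul_exp_le (m : ℕ) {u c : ℝ} (hu : 0 < u) (hc : 0 < c) :
    (Real.sqrt u ^ m)⁻¹ * Real.exp (-c ^ 2 / u) ≤ (m.factorial : ℝ) * (c ^ m)⁻¹ := by
  have hv : 0 < Real.sqrt u := Real.sqrt_pos.mpr hu
  have hr : 0 ≤ c / Real.sqrt u := by positivity
  have h1 := pow_mul_exp_neg_sq_le m hr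
  have h2 : (c / Real.sqrt u) ^ 2 = c ^ 2 / u := by
    rw [div_pow, Real.sq_sqrt hu.le]
  rw [div_pow, h2] at h1
  have hc' : (0:ℝ) < c ^ m := by positivity
  have key : (Real.sqrt u ^ m)⁻¹ * Real.exp (-c ^ 2 / u)
      = (c ^ m / Real.sqrt u ^ m * Real.exp (-(c ^ 2 / u))) / c ^ m := by
    rw [neg_div]; field_simp
  rw [key, div_le_iff₀ hc']
  calc c ^ m / Real.sqrt u ^ m * Real.exp (-(c ^ 2 / u)) ≤ (m.factorial : ℝ) := h1
    _ = (m.factorial : ℝ) * (c ^ m)⁻¹ * c ^ m := by field_simp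

private lemma rpow_neg_nat_div_two {u : ℝ} (hu : 0 < u) (m : ℕ) :
    u ^ (-(m:ℝ)/2) = (Real.sqrt u ^ m)⁻¹ := by
  rw [Real.sqrt_eq_rpow, ← Real.rpow_natCast (u ^ ((1:ℝ)/2)) m, ← Real.rpow_mul hu.le,
    ← Real.rpow_neg hu.le]
  congr 1
  ring

private lemma inv_pow_mul_exp_le_exp (m : ℕ) {u p : ℝ} (hu0 : 0 < u) (hu1 : u ≤ 1)
    (hp : (m:ℝ) ≤ 2 * p ^ 2) :
    (Real.sqrt u ^ m)⁻¹ * Real.exp (-p ^ 2 / u) ≤ Real.exp (-p ^ 2) := by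
  have hv : 0 < Real.sqrt u := Real.sqrt_pos.mpr hu0
  have h1 : Real.sqrt u ^ m = Real.exp ((m:ℝ) * (Real.log u / 2)) := by
    rw [← Real.log_sqrt hu0.le, Real.exp_nat_mul, Real.exp_log hv]
  have hw1 : 1 ≤ 1/u := by rw [le_div_iff₀ hu0]; linarith
  have hlog : Real.log (1/u) ≤ 1/u - 1 := Real.log_le_sub_one_of_pos (by positivity)
  have hlogu : Real.log (1/u) = -Real.log u := by rw [one_div, Real.log_inv]
  have hpu : p ^ 2 / u = p ^ 2 * (1/u) := by ring
  rw [h1, ← Real.exp_neg, ← Real.exp_add, Real.exp_le_exp]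
  -- goal : -(m * (log u / 2)) + -p^2/u ≤ -p^2
  have hL : -Real.log u ≤ 1/u - 1 := by rw [← hlogu]; exact hlog
  have hm0 : (0:ℝ) ≤ (m:ℝ) := Nat.cast_nonneg m
  have t1 : (m:ℝ)/2 * (-Real.log u) ≤ (m:ℝ)/2 * (1/u - 1) := by
    apply mul_le_mul_of_nonneg_left hL (by positivity)
  have t2 : (m:ℝ)/2 * (1/u - 1) ≤ p ^ 2 * (1/u - 1) := by
    apply mul_le_mul_of_nonneg_right (by linarith) (by linarith)
  have : -p ^ 2 / u = -(p ^ 2 * (1/u)) := by ring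
  rw [this]
  nlinarith [t1, t2]

private lemma sqrt_tri (p q c c' : ℝ) :
    Real.sqrt (p ^ 2 + (q - c') ^ 2) ≤ Real.sqrt (p ^ 2 + (q - c) ^ 2) + |c' - c| := by
  have hB : |q - c| ≤ Real.sqrt (p ^ 2 + (q - c) ^ 2) := by
    rw [← Real.sqrt_sq_eq_abs]
    exact Real.sqrt_le_sqrt (by nlinarith [sq_nonneg p])
  have hB0 : 0 ≤ Real.sqrt (p ^ 2 + (q - c) ^ 2) := Real.sqrt_nonneg _
  have hm : 0 ≤ |c' - c| := abs_nonneg _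
  have habs : -((q - c) * (c' - c)) ≤ |q - c| * |c' - c| := by
    rw [← abs_mul]
    exact neg_le_abs _
  have h2 : Real.sqrt (p ^ 2 + (q - c) ^ 2) ^ 2 = p ^ 2 + (q - c) ^ 2 :=
    Real.sq_sqrt (by positivity)
  have h3 : |c' - c| ^ 2 = (c' - c) ^ 2 := sq_abs _
  have hsq : p ^ 2 + (q - c') ^ 2 ≤ (Real.sqrt (p ^ 2 + (q - c) ^ 2) + |c' - c|) ^ 2 := by
    nlinarith [mul_le_mul_of_nonneg_right hB hm]
  calc Real.sqrt (p ^ 2 + (q - c') ^ 2)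
      ≤ Real.sqrt ((Real.sqrt (p ^ 2 + (q - c) ^ 2) + |c' - c|) ^ 2) := Real.sqrt_le_sqrt hsq
    _ = _ := Real.sqrt_sq (by positivity)

private lemma finA {X c C T1 T2 T3 : ℝ} (h : X ≤ c * T1) (hc : 0 ≤ c) (hcC : c ≤ C)
    (h1 : 0 ≤ T1) (h2 : 0 ≤ T2) (h3 : 0 ≤ T3) : X ≤ C * (T1 + T2 + T3) := by
  have hC0 : 0 ≤ C := hc.trans hcC
  nlinarith [mul_le_mul_of_nonneg_right hcC h1, mul_nonneg hC0 h2, mul_nonneg hC0 h3]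

private lemma finB {X c C T1 T2 T3 : ℝ} (h : X ≤ c * T2) (hc : 0 ≤ c) (hcC : c ≤ C)
    (h1 : 0 ≤ T1) (h2 : 0 ≤ T2) (h3 : 0 ≤ T3) : X ≤ C * (T1 + T2 + T3) := by
  have hC0 : 0 ≤ C := hc.trans hcC
  nlinarith [mul_le_mul_of_nonneg_right hcC h2, mul_nonneg hC0 h1, mul_nonneg hC0 h3]

private lemma finC {X c C T1 T2 T3 : ℝ} (h : X ≤ c * T3) (hc : 0 ≤ c) (hcC : c ≤ C)
    (h1 : 0 ≤ T1) (h2 : 0 ≤ T2) (h3 : 0 ≤ T3) : X ≤ C * (T1 + T2 + T3) := by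
  have hC0 : 0 ≤ C := hc.trans hcC
  nlinarith [mul_le_mul_of_nonneg_right hcC h3, mul_nonneg hC0 h1, mul_nonneg hC0 h2]

private lemma inv_sqrt_pow_le' {u c : ℝ} (n : ℕ) (hc : 0 < c) (h : c ^ 2 ≤ u) :
    (Real.sqrt u ^ n)⁻¹ ≤ (c ^ n)⁻¹ := by
  have hcv : c ≤ Real.sqrt u := by
    have := Real.sqrt_le_sqrt h
    rwa [Real.sqrt_sq hc.le] at this
  have h1 : c ^ n ≤ Real.sqrt u ^ n := pow_le_pow_left₀ hc.le hcv n
  exact inv_anti₀ (by positivity) h1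
set_option maxHeartbeats 2000000 in
private lemma master (n : ℕ) (hn : 2 ≤ n) (a b p q s : ℝ)
    (ha : 0 < a) (hb : 0 < b) (hp : 0 ≤ p) (hpq : p ^ 2 + q ^ 2 = b ^ 2)
    (hs0 : 0 < s) (hs1 : s < 1)
    (hglob : 1 < Real.sqrt (p ^ 2 + (a - q) ^ 2) ∨ 1 < Real.sqrt (p ^ 2 + (a - q) ^ 2) * a) :
    s ^ (n - 1) * (1 - s ^ 2) ^ (-(n : ℝ) / 2) *
        Real.exp (-(p ^ 2 + (q - s * a) ^ 2) / (1 - s ^ 2)) ≤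
      ((n.factorial : ℝ) * 4 ^ (2 * n) * 3 ^ n) *
        (a ^ ((1 : ℝ) - n)
          + Real.exp (-p ^ 2) * (b / a) ^ ((n : ℝ) - 1) * a * (if b ≤ 2 * a then (1:ℝ) else 0)
          + (if p = 0 then (1 + a) ^ n else
              min ((1 + a) ^ n) ((a * (p / b)) ^ (-(n : ℝ))))) := by
  have h1n : 1 ≤ n := le_trans one_le_two hn
  have hcast : ((n - 1 : ℕ) : ℝ) = (n : ℝ) - 1 := by
    rw [Nat.cast_sub h1n]; norm_num
  set F : ℝ := (n.factorial : ℝ) with hF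
  have hF1 : (1:ℝ) ≤ F := by rw [hF]; exact_mod_cast n.factorial_pos
  have hF0 : (0:ℝ) ≤ F := by linarith
  have hu0 : 0 < 1 - s ^ 2 := by nlinarith only [mul_pos (by linarith only [hs1] : (0:ℝ) < 1 - s) (by linarith only [hs0] : (0:ℝ) < 1 + s)]
  rw [rpow_neg_nat_div_two hu0 n]
  set u : ℝ := 1 - s ^ 2 with hu
  have hu1 : u ≤ 1 := by nlinarith [sq_nonneg s]
  set v : ℝ := Real.sqrt u with hv
  have hv0 : 0 < v := Real.sqrt_pos.mpr hu0
  set D : ℝ := p ^ 2 + (q - s * a) ^ 2 with hD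
  have hD0 : 0 ≤ D := by positivity
  have hpD : p ^ 2 ≤ D := by nlinarith [sq_nonneg (q - s * a)]
  have hE1 : Real.exp (-D / u) ≤ 1 := by
    rw [Real.exp_le_one_iff, neg_div]
    have : 0 ≤ D / u := div_nonneg hD0 hu0.le
    linarith
  have hE0 : 0 ≤ Real.exp (-D / u) := (Real.exp_pos _).le
  have hsn1 : s ^ (n - 1) ≤ 1 := pow_le_one₀ hs0.le hs1.le
  have hsnn : 0 ≤ s ^ (n - 1) := by positivity
  set W : ℝ := (v ^ n)⁻¹ * Real.exp (-D / u) with hW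
  have hW0 : 0 ≤ W := by positivity
  have hΨW : s ^ (n - 1) * (v ^ n)⁻¹ * Real.exp (-D / u) = s ^ (n - 1) * W := by
    rw [hW]; ring
  rw [hΨW]
  clear_value W
  clear_value F
  clear_value D
  clear_value v
  clear_value u
  -- key decay estimate
  have keyE : ∀ c : ℝ, 0 < c → c ^ 2 ≤ D → W ≤ F * (c ^ n)⁻¹ := by
    intro c hc hcD
    have h1 : -D / u ≤ -c ^ 2 / u := (div_le_div_iff_of_pos_right hu0).mpr (by linarith only [hcD])
    calc W ≤ (v ^ n)⁻¹ * Real.exp (-c ^ 2 / u) := by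
          rw [hW]
          exact mul_le_mul_of_nonneg_left (Real.exp_le_exp.mpr h1) (by positivity)
      _ ≤ F * (c ^ n)⁻¹ := by rw [hv, hF]; exact inv_pow_mul_exp_le n hu0 hc

  -- nonnegativity of target terms
  have hT1 : 0 ≤ a ^ ((1:ℝ) - n) := (Real.rpow_pos_of_pos ha _).le
  have hInd : 0 ≤ (if b ≤ 2 * a then (1:ℝ) else 0) := by split <;> norm_num
  have hba0 : (0:ℝ) ≤ b / a := by positivity
  have hT2 : 0 ≤ Real.exp (-p ^ 2) * (b / a) ^ ((n:ℝ) - 1) * a *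
      (if b ≤ 2 * a then (1:ℝ) else 0) :=
    mul_nonneg (mul_nonneg (mul_nonneg (Real.exp_pos _).le (Real.rpow_nonneg hba0 _)) ha.le) hInd
  have hT3 : 0 ≤ (if p = 0 then (1 + a) ^ n else
      min ((1 + a) ^ n) ((a * (p / b)) ^ (-(n : ℝ)))) := by
    split
    · positivity
    · exact le_min (by positivity) (Real.rpow_nonneg (by positivity) _)
  have hT1eq : a ^ ((1:ℝ) - n) = ((a : ℝ) ^ (n - 1))⁻¹ := by
    rw [show ((1:ℝ) - n) = -(((n - 1 : ℕ)):ℝ) by rw [hcast]; ring,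
      Real.rpow_neg ha.le, Real.rpow_natCast]
  have hT2eq : (b / a) ^ ((n:ℝ) - 1) = (b / a) ^ (n - 1) := by
    rw [← hcast, Real.rpow_natCast]
  -- constants
  have h3n : (1:ℝ) ≤ 3 ^ n := one_le_pow₀ (by norm_num)
  have hpow2 : ∀ j : ℕ, j ≤ 4 * n → (2:ℝ) ^ j ≤ 4 ^ (2 * n) := by
    intro j hj
    calc (2:ℝ) ^ j ≤ 2 ^ (4 * n) := pow_le_pow_right₀ (by norm_num) hj
      _ = 4 ^ (2 * n) := by
          rw [show (4:ℝ) = 2 ^ 2 by norm_num, ← pow_mul, show 2 * (2 * n) = 4 * n by ring]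
  have hpow4 : ∀ j : ℕ, j ≤ 2 * n → (4:ℝ) ^ j ≤ 4 ^ (2 * n) := fun j hj =>
    pow_le_pow_right₀ (by norm_num) hj
  have hCbig : ∀ j : ℕ, j ≤ 4 * n → F * (2:ℝ) ^ j ≤ F * 4 ^ (2 * n) * 3 ^ n := by
    intro j hj
    calc F * (2:ℝ) ^ j ≤ F * 4 ^ (2 * n) := mul_le_mul_of_nonneg_left (hpow2 j hj) hF0
      _ ≤ F * 4 ^ (2 * n) * 3 ^ n := le_mul_of_one_le_right (by positivity) h3n
  have hexp2 : (2:ℝ) ^ (n - 1) * 2 ^ n = 2 ^ (2 * n - 1) := by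
    rw [← pow_add]; congr 1; omega
  have hvsmall : s ≤ 1/2 → (v ^ n)⁻¹ ≤ (2:ℝ) ^ n := by
    intro hs2
    have h2 := inv_sqrt_pow_le' (u := u) n (c := 1/2) (by norm_num) (by rw [hu]; nlinarith only [hs0, hs2])
    rw [hv]
    calc (Real.sqrt u ^ n)⁻¹ ≤ (((1:ℝ)/2) ^ n)⁻¹ := h2
      _ = 2 ^ n := by rw [one_div, inv_pow, inv_inv]
  rcases le_or_gt a 1 with ha1 | ha1
  · -- Case 1 : a ≤ 1, bound by first term
    have hd1 : 1 < Real.sqrt (p ^ 2 + (a - q) ^ 2) := by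
      rcases hglob with h | h
      · exact h
      · nlinarith only [h, ha1, Real.sqrt_nonneg (p ^ 2 + (a - q) ^ 2)]
    have haT1 : 1 ≤ a ^ ((1:ℝ) - n) := by
      apply Real.one_le_rpow_of_pos_of_le_one_of_nonpos ha ha1
      have h2 : (2:ℝ) ≤ n := by exact_mod_cast hn
      linarith only [h2]
    have hΨ : s ^ (n - 1) * W ≤ F * 2 ^ n := by
      rcases le_or_gt s (1/2) with hs2 | hs2
      · calc s ^ (n-1) * W ≤ 1 * W := mul_le_mul_of_nonneg_right hsn1 hW0
          _ = (v ^ n)⁻¹ * Real.exp (-D/u) := by rw [one_mul, hW]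
          _ ≤ 2 ^ n * 1 := mul_le_mul (hvsmall hs2) hE1 hE0 (by positivity)
          _ = 2 ^ n := mul_one _
          _ ≤ F * 2 ^ n := le_mul_of_one_le_left (by positivity) hF1
      · have htri := sqrt_tri p q (s * a) a
        rw [← hD] at htri
        have habs : |a - s * a| = (1 - s) * a := by
          rw [abs_of_nonneg (by nlinarith only [mul_nonneg ha.le (sub_nonneg.mpr hs1.le)])]; ring
        rw [habs] at htri
        have hre : Real.sqrt (p ^ 2 + (a - q) ^ 2) = Real.sqrt (p ^ 2 + (q - a) ^ 2) := by
          rw [show (a - q) ^ 2 = (q - a) ^ 2 by ring]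
        rw [hre] at hd1
        have hmm : (1 - s) * a ≤ 1 - s := by
          nlinarith only [mul_le_mul_of_nonneg_left ha1 (sub_nonneg.mpr hs1.le)]
        have hlb : 1/2 < Real.sqrt D := by linarith only [hd1, htri, hs2, hmm]
        have hD4 : ((1:ℝ)/2) ^ 2 ≤ D := by
          nlinarith only [hlb, Real.sqrt_nonneg D, Real.sq_sqrt hD0]
        have h2 := keyE (1/2) (by norm_num) hD4
        calc s ^ (n-1) * W ≤ 1 * W := mul_le_mul_of_nonneg_right hsn1 hW0
          _ = W := one_mul W
          _ ≤ F * ((1/2 : ℝ) ^ n)⁻¹ := h2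
          _ = F * 2 ^ n := by rw [one_div, inv_pow, inv_inv]
    refine finA (c := F * 2 ^ n) ?_ (by positivity) (hCbig n (by omega)) hT1 hT2 hT3
    calc s ^ (n-1) * W ≤ F * 2 ^ n := hΨ
      _ = (F * 2 ^ n) * 1 := (mul_one _).symm
      _ ≤ (F * 2 ^ n) * a ^ ((1:ℝ) - n) :=
          mul_le_mul_of_nonneg_left haT1 (by positivity)
  · -- Case 2 : 1 < a
    have hd : 1/a < Real.sqrt (p ^ 2 + (a - q) ^ 2) := by
      rcases hglob with h | h
      · calc 1/a < 1 := by rw [div_lt_one ha]; exact ha1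
          _ < _ := h
      · exact (div_lt_iff₀ ha).mpr (by linarith only [h])
    have hstar : s ^ (n-1) * W ≤ F * 2 ^ n * (1 + a) ^ n := by
      have h2a : (0:ℝ) < 1/(2*a) := by positivity
      have hkey : W ≤ F * ((1/(2*a)) ^ n)⁻¹ → s ^ (n-1) * W ≤ F * 2 ^ n * (1 + a) ^ n := by
        intro h
        have heq : ((1/(2*a):ℝ) ^ n)⁻¹ = (2*a) ^ n := by rw [one_div, inv_pow, inv_inv]
        have h2an : ((2*a):ℝ) ^ n ≤ 2 ^ n * (1+a) ^ n := by
          rw [mul_pow]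
          exact mul_le_mul_of_nonneg_left (pow_le_pow_left₀ ha.le (by linarith only []) n) (by positivity)
        calc s ^ (n-1) * W ≤ 1 * W := mul_le_mul_of_nonneg_right hsn1 hW0
          _ = W := one_mul W
          _ ≤ F * ((1/(2*a)) ^ n)⁻¹ := h
          _ = F * (2*a) ^ n := by rw [heq]
          _ ≤ F * (2 ^ n * (1+a) ^ n) := mul_le_mul_of_nonneg_left h2an hF0
          _ = F * 2 ^ n * (1+a) ^ n := by ring
      rcases le_or_gt (1/(2*a^2)) u with hcase | hcase
      · apply hkey
        have h1 : (1/(2*a)) ^ 2 ≤ u := by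
          have he : (1/(2*a):ℝ) ^ 2 = 1/(4*a^2) := by
            rw [div_pow]; norm_num; ring_nf
          rw [he]
          calc (1:ℝ)/(4*a^2) ≤ 1/(2*a^2) :=
                one_div_le_one_div_of_le (by positivity) (by nlinarith only [sq_nonneg a])
            _ ≤ u := hcase
        have h2 : (v ^ n)⁻¹ ≤ ((1/(2*a)) ^ n)⁻¹ := by rw [hv]; exact inv_sqrt_pow_le' n h2a h1
        rw [hW]
        calc (v ^ n)⁻¹ * Real.exp (-D/u) ≤ ((1/(2*a)) ^ n)⁻¹ * 1 :=
              mul_le_mul h2 hE1 hE0 (by positivity)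
          _ = ((1/(2*a)) ^ n)⁻¹ := mul_one _
          _ ≤ F * ((1/(2*a)) ^ n)⁻¹ := le_mul_of_one_le_left (by positivity) hF1
      · apply hkey
        have h1s : 1 - s ≤ u := by rw [hu]; nlinarith only [mul_nonneg hs0.le (sub_nonneg.mpr hs1.le)]
        have htri := sqrt_tri p q (s*a) a
        rw [← hD] at htri
        have habs : |a - s*a| = (1-s)*a := by rw [abs_of_nonneg (by nlinarith only [mul_nonneg ha.le (sub_nonneg.mpr hs1.le)])]; ring
        rw [habs] at htri
        have hre : Real.sqrt (p^2 + (a-q)^2) = Real.sqrt (p^2 + (q-a)^2) := by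
          rw [show (a-q)^2 = (q-a)^2 by ring]
        rw [hre] at hd
        have h2 : (1-s)*a < 1/(2*a) := by
          have h3 : u * a < (1/(2*a^2)) * a := mul_lt_mul_of_pos_right hcase ha
          have h4 : (1/(2*a^2)) * a = 1/(2*a) := by field_simp
          have h5 : (1-s)*a ≤ u*a := mul_le_mul_of_nonneg_right h1s ha.le
          linarith only [h3, h4, h5]
        have hhalf : 1/a - 1/(2*a) = 1/(2*a) := by field_simp; ring
        have hdd : 1/(2*a) < Real.sqrt D := by linarith only [htri, hd, h2, hhalf]
        have hD2 : (1/(2*a))^2 ≤ D := by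
          nlinarith only [hdd, h2a, Real.sqrt_nonneg D, Real.sq_sqrt hD0]
        exact keyE (1/(2*a)) h2a hD2
    rcases le_or_gt (s*a/2) |q - s*a| with h2b | h2c
    · -- Case 2b : |q - sa| ≥ sa/2 ; bound by first term
      have hDsa : (s*a/2)^2 ≤ (q - s*a)^2 := by
        nlinarith only [h2b, sq_abs (q - s*a), abs_nonneg (q - s*a), mul_pos hs0 ha]
      have hDlb : (s*a/2)^2 ≤ D := by rw [hD]; linarith only [hDsa, sq_nonneg p]
      rcases le_or_gt s (1/2) with hs2 | hs2
      · have hEexp : Real.exp (-D/u) ≤ Real.exp (-(s*a/2)^2) := by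
          rw [Real.exp_le_exp]
          have hDu : D ≤ D/u := by
            rw [le_div_iff₀ hu0]
            exact mul_le_of_le_one_right hD0 hu1
          have h6 : -D/u = -(D/u) := by ring
          rw [h6]
          linarith only [hDu, hDlb]
        have hfac : s^(n-1) = (2/a)^(n-1) * (s*a/2)^(n-1) := by
          rw [← mul_pow]
          congr 1
          field_simp
        have hfa : (s*a/2)^(n-1) * Real.exp (-(s*a/2)^2) ≤ F := by
          calc (s*a/2)^(n-1) * Real.exp (-(s*a/2)^2) ≤ ((n-1).factorial : ℝ) :=
                pow_mul_exp_neg_sq_le (n-1) (by positivity)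
            _ ≤ F := by rw [hF]; exact_mod_cast Nat.factorial_le (Nat.sub_le n 1)
        have hWb : W ≤ 2^n * Real.exp (-(s*a/2)^2) := by
          rw [hW]
          exact mul_le_mul (hvsmall hs2) hEexp hE0 (by positivity)
        have hdivpow : (2/a:ℝ)^(n-1) = 2^(n-1) * ((a:ℝ)^(n-1))⁻¹ := by
          rw [div_pow, div_eq_mul_inv]
        have hmain : s^(n-1) * W ≤ (F * 2^(2*n-1)) * ((a:ℝ)^(n-1))⁻¹ := by
          calc s^(n-1) * W ≤ s^(n-1) * (2^n * Real.exp (-(s*a/2)^2)) :=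
                mul_le_mul_of_nonneg_left hWb hsnn
            _ = 2^n * ((2/a)^(n-1) * ((s*a/2)^(n-1) * Real.exp (-(s*a/2)^2))) := by
                rw [hfac]; ring
            _ ≤ 2^n * ((2/a)^(n-1) * F) := by
                apply mul_le_mul_of_nonneg_left ?_ (by positivity)
                exact mul_le_mul_of_nonneg_left hfa (by positivity)
            _ = (2^(n-1) * 2^n) * F * ((a:ℝ)^(n-1))⁻¹ := by rw [hdivpow]; ring
            _ = (F * 2^(2*n-1)) * ((a:ℝ)^(n-1))⁻¹ := by rw [hexp2]; ring
        refine finA (c := F * 2^(2*n-1)) ?_ (by positivity) (hCbig (2*n-1) (by omega)) hT1 hT2 hT3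
        rw [hT1eq]; exact hmain
      · have hdiff : 0 ≤ s*a/2 - a/4 := by
          nlinarith only [mul_nonneg ha.le (by linarith only [hs2] : (0:ℝ) ≤ 2*s - 1)]
        have hD4 : (a/4)^2 ≤ D := by
          nlinarith only [hDlb, mul_nonneg hdiff (by positivity : (0:ℝ) ≤ s*a/2 + a/4)]
        have h := keyE (a/4) (by positivity) hD4
        have heq : ((a/4:ℝ)^n)⁻¹ = 4^n * ((a:ℝ)^n)⁻¹ := by
          rw [div_pow, inv_div, div_eq_mul_inv]
        have hana : ((a:ℝ)^n)⁻¹ ≤ ((a:ℝ)^(n-1))⁻¹ := by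
          apply inv_anti₀ (by positivity)
          exact pow_le_pow_right₀ ha1.le (Nat.sub_le n 1)
        have hmain : s^(n-1) * W ≤ (F * 4^n) * ((a:ℝ)^(n-1))⁻¹ := by
          calc s^(n-1)*W ≤ 1*W := mul_le_mul_of_nonneg_right hsn1 hW0
            _ = W := one_mul W
            _ ≤ F * ((a/4)^n)⁻¹ := h
            _ = (F * 4^n) * ((a:ℝ)^n)⁻¹ := by rw [heq]; ring
            _ ≤ (F * 4^n) * ((a:ℝ)^(n-1))⁻¹ :=
                mul_le_mul_of_nonneg_left hana (by positivity)
        refine finA (c := F * 4^n) ?_ (by positivity) ?_ hT1 hT2 hT3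
        · rw [hT1eq]; exact hmain
        · calc F * (4:ℝ)^n ≤ F * 4^(2*n) := mul_le_mul_of_nonneg_left (hpow4 n (by omega)) hF0
            _ ≤ F * 4^(2*n) * 3^n := le_mul_of_one_le_right (by positivity) h3n
    · -- Case 2c : |q - sa| < sa/2
      have hsa2 : 0 < s*a/2 := by positivity
      have hq1 : s*a/2 < q := by
        rcases abs_lt.mp h2c with ⟨h3, h4⟩; linarith only [h3]
      have hq2 : q < 3*(s*a)/2 := by
        rcases abs_lt.mp h2c with ⟨h3, h4⟩; linarith only [h4]
      have hq0 : 0 < q := lt_trans hsa2 hq1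
      have hqb : q ≤ b := by nlinarith only [hpq, sq_nonneg p, hq0, hb]
      have hsb : s ≤ 2*b/a := by rw [le_div_iff₀ ha]; linarith only [hq1, hqb]
      have hba2 : (0:ℝ) ≤ 2*b/a := by positivity
      have hsn2 : s^(n-1) ≤ (2*b/a)^(n-1) := pow_le_pow_left₀ hs0.le hsb _
      have hΨ2 : ∀ Z : ℝ, W ≤ Z → s^(n-1)*W ≤ (2*b/a)^(n-1) * Z := by
        intro Z hWZ
        calc s^(n-1)*W ≤ (2*b/a)^(n-1) * W := mul_le_mul_of_nonneg_right hsn2 hW0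
          _ ≤ (2*b/a)^(n-1) * Z := mul_le_mul_of_nonneg_left hWZ (by positivity)
      rcases lt_or_ge (2*a) b with h2ci | h2cii
      · -- 2c-i : b > 2a, bound by first term
        have hq3 : q < 3*b/4 := by
          nlinarith only [hq2, h2ci, mul_lt_mul_of_pos_right hs1 ha]
        have hp2 : (b/2)^2 < p^2 := by
          nlinarith only [hpq, mul_pos (by linarith only [hq3] : (0:ℝ) < 3*b/4 - q)
            (by linarith only [hq0, hb] : (0:ℝ) < 3*b/4 + q)]
        have hpb : b/2 < p := lt_of_pow_lt_pow_left₀ 2 hp hp2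
        have hp0' : 0 < p := by linarith only [hpb, hb]
        have hW2 : W ≤ F * ((p:ℝ)^n)⁻¹ := keyE p hp0' hpD
        have h1 := hΨ2 _ hW2
        have h2 : (2*b/a)^(n-1) ≤ (4*p/a)^(n-1) := by
          apply pow_le_pow_left₀ hba2
          exact (div_le_div_iff_of_pos_right ha).mpr (by linarith only [hpb])
        have hpn : (p:ℝ)^n = p^(n-1) * p := by
          rw [← pow_succ]; congr 1; omega
        have h3 : (4*p/a)^(n-1) * (F * ((p:ℝ)^n)⁻¹)
            = F * 4^(n-1) * ((a:ℝ)^(n-1))⁻¹ * p⁻¹ := by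
          rw [div_pow, mul_pow, hpn]
          field_simp
        have hpinv : p⁻¹ ≤ 1 := by
          apply inv_le_one_of_one_le₀
          linarith only [hpb, h2ci, ha1]
        have hmain : s^(n-1)*W ≤ (F*4^(n-1)) * ((a:ℝ)^(n-1))⁻¹ := by
          calc s^(n-1)*W ≤ (4*p/a)^(n-1) * (F * ((p:ℝ)^n)⁻¹) :=
                h1.trans (mul_le_mul_of_nonneg_right h2 (by positivity))
            _ = F * 4^(n-1) * ((a:ℝ)^(n-1))⁻¹ * p⁻¹ := h3
            _ ≤ F * 4^(n-1) * ((a:ℝ)^(n-1))⁻¹ * 1 :=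
                mul_le_mul_of_nonneg_left hpinv (by positivity)
            _ = (F*4^(n-1)) * ((a:ℝ)^(n-1))⁻¹ := by ring
        refine finA (c := F * 4^(n-1)) ?_ (by positivity) ?_ hT1 hT2 hT3
        · rw [hT1eq]; exact hmain
        · calc F * (4:ℝ)^(n-1) ≤ F * 4^(2*n) :=
                mul_le_mul_of_nonneg_left (hpow4 (n-1) (by omega)) hF0
            _ ≤ F * 4^(2*n) * 3^n := le_mul_of_one_le_right (by positivity) h3n
      · -- 2c-ii : b ≤ 2a
        have hIf : (if b ≤ 2*a then (1:ℝ) else 0) = 1 := if_pos h2cii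
        have hT2form : Real.exp (-p^2) * (b/a) ^ ((n:ℝ)-1) * a * (if b ≤ 2*a then (1:ℝ) else 0)
            = Real.exp (-p^2) * (b/a)^(n-1) * a := by rw [hT2eq, hIf, mul_one]
        have h2ba : (2*b/a:ℝ)^(n-1) = 2^(n-1) * (b/a)^(n-1) := by
          rw [show (2*b/a:ℝ) = 2*(b/a) by ring, mul_pow]
        by_cases hp0 : p = 0
        · refine finC (c := F * 2^n) ?_ (by positivity) (hCbig n (by omega)) hT1 hT2 hT3
          rw [if_pos hp0]
          exact hstar
        · have hp0' : 0 < p := lt_of_le_of_ne hp (Ne.symm hp0)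
          rcases le_or_gt (n:ℝ) (2*p^2) with hA | hBp
          · -- large p : second term via monotonicity
            have hmono := inv_pow_mul_exp_le_exp n hu0 hu1 hA
            have hWp : W ≤ Real.exp (-p^2) := by
              rw [hW]
              have hdu : -D/u ≤ -p^2/u := (div_le_div_iff_of_pos_right hu0).mpr (by linarith only [hpD])
              calc (v^n)⁻¹ * Real.exp (-D/u) ≤ (v^n)⁻¹ * Real.exp (-p^2/u) :=
                    mul_le_mul_of_nonneg_left (Real.exp_le_exp.mpr hdu) (by positivity)
                _ ≤ Real.exp (-p^2) := by rw [hv]; exact hmono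
            have hmain : s^(n-1)*W ≤ 2^(n-1) * (Real.exp (-p^2) * (b/a)^(n-1) * a) := by
              calc s^(n-1)*W ≤ (2*b/a)^(n-1) * Real.exp (-p^2) := hΨ2 _ hWp
                _ = 2^(n-1) * (Real.exp (-p^2) * (b/a)^(n-1)) := by rw [h2ba]; ring
                _ ≤ 2^(n-1) * (Real.exp (-p^2) * (b/a)^(n-1) * a) := by
                    apply mul_le_mul_of_nonneg_left ?_ (by positivity)
                    exact le_mul_of_one_le_right (by positivity) ha1.le
            refine finB (c := (2:ℝ)^(n-1)) ?_ (by positivity) ?_ hT1 hT2 hT3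
            · rw [hT2form]; exact hmain
            · calc ((2:ℝ))^(n-1) ≤ F * 2^(n-1) := le_mul_of_one_le_left (by positivity) hF1
                _ ≤ F * 4^(2*n) * 3^n := hCbig (n-1) (by omega)
          · -- small p
            have hep : 1 ≤ 3^n * Real.exp (-p^2) := by
              have h1 : Real.exp (p^2) ≤ (3:ℝ)^n := by
                calc Real.exp (p^2) ≤ Real.exp (n:ℝ) := Real.exp_le_exp.mpr (by nlinarith only [hBp, sq_nonneg p])
                  _ = Real.exp 1 ^ n := by
                      rw [show ((n:ℝ)) = ((n:ℕ):ℝ)*1 by ring]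
                      exact Real.exp_nat_mul 1 n
                  _ ≤ 3^n := pow_le_pow_left₀ (Real.exp_pos 1).le
                      (by have h9 := Real.exp_one_lt_d9; linarith only [h9]) n
              have h2 : Real.exp (p^2) * Real.exp (-p^2) ≤ 3^n * Real.exp (-p^2) :=
                mul_le_mul_of_nonneg_right h1 (Real.exp_pos _).le
              rwa [← Real.exp_add, add_neg_cancel, Real.exp_zero] at h2
            rcases le_or_gt 1 (a * p^n) with hB1 | hB2
            · -- second term
              have hW2 : W ≤ F * ((p:ℝ)^n)⁻¹ := keyE p hp0' hpD
              have hpninv : ((p:ℝ)^n)⁻¹ ≤ a := by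
                rw [inv_eq_one_div, div_le_iff₀ (by positivity : (0:ℝ) < p^n)]
                linarith only [hB1]
              have hmain : s^(n-1)*W ≤ (F*2^(n-1)*3^n) * (Real.exp (-p^2)*(b/a)^(n-1)*a) := by
                calc s^(n-1)*W ≤ (2*b/a)^(n-1) * (F * ((p:ℝ)^n)⁻¹) := hΨ2 _ hW2
                  _ ≤ (2*b/a)^(n-1) * (F * a) :=
                      mul_le_mul_of_nonneg_left
                        (mul_le_mul_of_nonneg_left hpninv hF0) (by positivity)
                  _ = (F*2^(n-1)) * ((b/a)^(n-1) * a) := by rw [h2ba]; ring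
                  _ ≤ (F*2^(n-1)) * ((3^n * Real.exp (-p^2)) * ((b/a)^(n-1) * a)) := by
                      apply mul_le_mul_of_nonneg_left ?_ (by positivity)
                      exact le_mul_of_one_le_left (by positivity) hep
                  _ = (F*2^(n-1)*3^n) * (Real.exp (-p^2)*(b/a)^(n-1)*a) := by ring
              refine finB (c := F*2^(n-1)*3^n) ?_ (by positivity) ?_ hT1 hT2 hT3
              · rw [hT2form]; exact hmain
              · apply mul_le_mul_of_nonneg_right ?_ (by positivity : (0:ℝ) ≤ 3^n)
                exact mul_le_mul_of_nonneg_left (hpow2 (n-1) (by omega)) hF0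
            · rcases le_or_gt (4*b) a with hBa | hBb
              · -- b tiny : second term directly
                have hs12 : s ≤ 1/2 := by
                  have h1 : 2*b/a ≤ 1/2 := by
                    rw [div_le_div_iff₀ ha (by norm_num : (0:ℝ) < 2)]; linarith only [hBa]
                  linarith only [h1, hsb]
                have hWb : W ≤ (2:ℝ)^n := by
                  rw [hW]
                  calc (v^n)⁻¹ * Real.exp (-D/u) ≤ 2^n * 1 :=
                        mul_le_mul (hvsmall hs12) hE1 hE0 (by positivity)
                    _ = 2^n := mul_one _
                have hmain : s^(n-1)*W ≤ (2^(2*n-1)*3^n) * (Real.exp (-p^2)*(b/a)^(n-1)*a) := by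
                  calc s^(n-1)*W ≤ (2*b/a)^(n-1) * 2^n := hΨ2 _ hWb
                    _ = (2^(n-1)*2^n) * ((b/a)^(n-1)) := by rw [h2ba]; ring
                    _ ≤ (2^(n-1)*2^n) * ((3^n * Real.exp (-p^2)) * ((b/a)^(n-1) * a)) := by
                        apply mul_le_mul_of_nonneg_left ?_ (by positivity)
                        calc (b/a:ℝ)^(n-1) = 1 * ((b/a)^(n-1) * 1) := by ring
                          _ ≤ (3^n * Real.exp (-p^2)) * ((b/a)^(n-1) * a) := by
                              apply mul_le_mul hep ?_ (by positivity) (by positivity)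
                              exact mul_le_mul_of_nonneg_left ha1.le (by positivity)
                    _ = (2^(n-1)*2^n) * (3^n) * (Real.exp (-p^2)*(b/a)^(n-1)*a) := by ring
                    _ = (2^(2*n-1)*3^n) * (Real.exp (-p^2)*(b/a)^(n-1)*a) := by rw [hexp2]
                refine finB (c := (2:ℝ)^(2*n-1)*3^n) ?_ (by positivity) ?_ hT1 hT2 hT3
                · rw [hT2form]; exact hmain
                · calc (2:ℝ)^(2*n-1)*3^n
                      ≤ 4^(2*n) * 3^n := by
                        apply mul_le_mul_of_nonneg_right (hpow2 (2*n-1) (by omega)) (by positivity)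
                    _ ≤ F * 4^(2*n) * 3^n := by
                        rw [mul_assoc]
                        exact le_mul_of_one_le_left (by positivity) hF1
              · -- min case
                have hBeq : ((a*(p/b)) : ℝ) ^ (-(n:ℝ)) = (((a*(p/b)):ℝ)^n)⁻¹ := by
                  rw [Real.rpow_neg (by positivity), Real.rpow_natCast]
                have hW2 : W ≤ F * ((p:ℝ)^n)⁻¹ := keyE p hp0' hpD
                have h1 := hΨ2 _ hW2
                have h2 : (2*b/a:ℝ)^(n-1) ≤ 4^(n-1) := by
                  apply pow_le_pow_left₀ hba2
                  rw [div_le_iff₀ ha]; linarith only [h2cii]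
                have h3 : ((p:ℝ)^n)⁻¹ ≤ 4^n * (((a*(p/b)):ℝ)^n)⁻¹ := by
                  have hap : a*(p/b) ≤ 4*p := by
                    have he : a*(p/b) = (a/b)*p := by ring
                    have hab : a/b ≤ 4 := by rw [div_le_iff₀ hb]; linarith only [hBb]
                    rw [he]
                    nlinarith only [mul_le_mul_of_nonneg_right hab hp0'.le]
                  have h4 : ((a*(p/b)):ℝ)^n ≤ (4*p)^n := pow_le_pow_left₀ (by positivity) hap n
                  have h5 : ((4*p:ℝ))^n = 4^n * p^n := mul_pow 4 p n
                  calc ((p:ℝ)^n)⁻¹ = 4^n * (((4*p:ℝ))^n)⁻¹ := by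
                        rw [h5, mul_inv]
                        field_simp
                    _ ≤ 4^n * (((a*(p/b)):ℝ)^n)⁻¹ :=
                        mul_le_mul_of_nonneg_left
                          (inv_anti₀ (by positivity) h4) (by positivity)
                have hbound2 : s^(n-1)*W ≤ (F*4^(2*n)) * (((a*(p/b)):ℝ)^n)⁻¹ := by
                  calc s^(n-1)*W ≤ (2*b/a)^(n-1) * (F*((p:ℝ)^n)⁻¹) := h1
                    _ ≤ 4^(n-1) * (F*(4^n * (((a*(p/b)):ℝ)^n)⁻¹)) :=
                        mul_le_mul h2 (mul_le_mul_of_nonneg_left h3 hF0)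
                          (by positivity) (by positivity)
                    _ = (F*(4^(n-1)*4^n)) * (((a*(p/b)):ℝ)^n)⁻¹ := by ring
                    _ ≤ (F*4^(2*n)) * (((a*(p/b)):ℝ)^n)⁻¹ := by
                        apply mul_le_mul_of_nonneg_right ?_ (by positivity)
                        apply mul_le_mul_of_nonneg_left ?_ hF0
                        rw [← pow_add]
                        exact pow_le_pow_right₀ (by norm_num) (by omega)
                have hbound1 : s^(n-1)*W ≤ (F*4^(2*n)) * (1+a)^n := by
                  calc s^(n-1)*W ≤ F*2^n*(1+a)^n := hstar
                    _ ≤ (F*4^(2*n)) * (1+a)^n := by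
                        apply mul_le_mul_of_nonneg_right ?_ (by positivity)
                        exact mul_le_mul_of_nonneg_left (hpow2 n (by omega)) hF0
                have hmin : s^(n-1)*W ≤ (F*4^(2*n)) *
                    min ((1+a)^n) ((a*(p/b)) ^ (-(n:ℝ))) := by
                  rw [hBeq, mul_min_of_nonneg _ _ (by positivity : (0:ℝ) ≤ F*4^(2*n))]
                  exact le_min hbound1 hbound2
                refine finC (c := F*4^(2*n)) ?_ (by positivity) ?_ hT1 hT2 hT3
                · rw [if_neg hp0]; exact hmin
                · exact le_mul_of_one_le_right (by positivity) h3n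


end Helpers

set_option maxHeartbeats 1000000 in
/-- Global estimate for `sup_{t>0} K₁(t,x,y)`. -/
theorem stmt13 (n : ℕ) (hn : 2 ≤ n) :
    ∃ C : ℝ, 0 < C ∧ ∀ x y : EuclideanSpace ℝ (Fin n), (x, y) ∉ localN n →
      x ≠ 0 → y ≠ 0 → ∀ t : ℝ, 0 < t →
      K1 n t x y ≤ C * Real.exp (‖y‖ ^ 2 - ‖x‖ ^ 2) *
        (‖x‖ ^ ((1 : ℝ) - n)
          + Real.exp (-‖yPerp n x y‖ ^ 2) * (‖y‖ / ‖x‖) ^ ((n : ℝ) - 1) * ‖x‖ *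
              (if ‖y‖ ≤ 2 * ‖x‖ then 1 else 0)
          + minTerm n x y) := by
  have hn0 : (0:ℝ) < (n:ℝ) := by exact_mod_cast lt_of_lt_of_le two_pos hn
  have hcn : (0:ℝ) < (n : ℝ) / Real.pi ^ ((n : ℝ) / 2) :=
    div_pos hn0 (Real.rpow_pos_of_pos Real.pi_pos _)
  refine ⟨((n : ℝ) / Real.pi ^ ((n : ℝ) / 2)) * ((n.factorial : ℝ) * 4 ^ (2 * n) * 3 ^ n),
    by positivity, ?_⟩
  intro x y hxy hx hy t ht
  have ha : 0 < ‖x‖ := norm_pos_iff.mpr hx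
  have hb : 0 < ‖y‖ := norm_pos_iff.mpr hy
  obtain ⟨q, hq⟩ : ∃ q : ℝ, q = (⟪x, y⟫ : ℝ) / ‖x‖ := ⟨_, rfl⟩
  -- orthogonal decomposition
  have hdecomp : ∀ r : ℝ, ‖y - r • x‖ ^ 2 = ‖yPerp n x y‖ ^ 2 + (q - r * ‖x‖) ^ 2 := by
    intro r
    have hxx : (⟪x, x⟫ : ℝ) = ‖x‖ ^ 2 := real_inner_self_eq_norm_sq x
    have hperp : (⟪x, yPerp n x y⟫ : ℝ) = 0 := by
      simp only [yPerp, inner_sub_right, real_inner_smul_right, hxx]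
      field_simp
      ring
    have hsplit : y - r • x = yPerp n x y + (((⟪x, y⟫ : ℝ) / ‖x‖ ^ 2) - r) • x := by
      simp only [yPerp, sub_smul]
      abel
    have hinner : (⟪yPerp n x y, (((⟪x, y⟫ : ℝ) / ‖x‖ ^ 2) - r) • x⟫ : ℝ) = 0 := by
      rw [real_inner_smul_right, real_inner_comm x (yPerp n x y), hperp, mul_zero]
    rw [hsplit, norm_add_sq_real, hinner, norm_smul]
    simp only [Real.norm_eq_abs, mul_pow, sq_abs]
    rw [hq]
    field_simp
    ring
  have hpq : ‖yPerp n x y‖ ^ 2 + q ^ 2 = ‖y‖ ^ 2 := by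
    have h0 := hdecomp 0
    simp only [zero_smul, sub_zero, zero_mul] at h0
    linarith only [h0]
  have hxy2 : ‖x - y‖ ^ 2 = ‖yPerp n x y‖ ^ 2 + (‖x‖ - q) ^ 2 := by
    have h1 := hdecomp 1
    rw [one_smul] at h1
    rw [norm_sub_rev, h1]
    ring
  have hd : Real.sqrt (‖yPerp n x y‖ ^ 2 + (‖x‖ - q) ^ 2) = ‖x - y‖ := by
    rw [← hxy2]
    exact Real.sqrt_sq (norm_nonneg _)
  have hglob' : 1 < Real.sqrt (‖yPerp n x y‖ ^ 2 + (‖x‖ - q) ^ 2) ∨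
      1 < Real.sqrt (‖yPerp n x y‖ ^ 2 + (‖x‖ - q) ^ 2) * ‖x‖ := by
    simp only [localN, Set.mem_setOf_eq, not_and, not_le] at hxy
    rcases le_or_gt ‖x - y‖ 1 with hc | hc
    · right; rw [hd]; exact hxy hc
    · left; rw [hd]; exact hc
  have hs0 : 0 < Real.exp (-t) := Real.exp_pos _
  have hs1 : Real.exp (-t) < 1 := Real.exp_lt_one_iff.mpr (by linarith only [ht])
  have hmaster := master n hn ‖x‖ ‖y‖ ‖yPerp n x y‖ q (Real.exp (-t)) ha hb
    (norm_nonneg _) hpq hs0 hs1 hglob'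
  -- rewrite the kernel
  have he2 : Real.exp (-2 * t) = Real.exp (-t) ^ 2 := by
    rw [← Real.exp_nat_mul]
    congr 1
    push_cast
    ring
  have hen : Real.exp (-(n : ℝ) * t) = Real.exp (-t) ^ n := by
    rw [← Real.exp_nat_mul]
    congr 1
    ring
  have hu0' : 0 < 1 - Real.exp (-t) ^ 2 := by nlinarith only [mul_pos (by linarith only [hs1] : (0:ℝ) < 1 - Real.exp (-t)) (by linarith only [hs0] : (0:ℝ) < 1 + Real.exp (-t))]
  have hsplitpow : (1 - Real.exp (-t) ^ 2) ^ (-((n : ℝ) + 2) / 2)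
      = (1 - Real.exp (-t) ^ 2) ^ (-(n : ℝ) / 2) * (1 - Real.exp (-t) ^ 2)⁻¹ := by
    calc (1 - Real.exp (-t) ^ 2) ^ (-((n : ℝ) + 2) / 2)
        = (1 - Real.exp (-t) ^ 2) ^ (-(n : ℝ) / 2 + (-1 : ℝ)) := by congr 1; ring
      _ = (1 - Real.exp (-t) ^ 2) ^ (-(n : ℝ) / 2) * (1 - Real.exp (-t) ^ 2) ^ (-1 : ℝ) :=
          Real.rpow_add hu0' _ _
      _ = _ := by rw [Real.rpow_neg_one]
  have hts : t * Real.exp (-t) ≤ 1 - Real.exp (-t) ^ 2 := by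
    have hlog : Real.log (Real.exp (-t))⁻¹ ≤ (Real.exp (-t))⁻¹ - 1 :=
      Real.log_le_sub_one_of_pos (by positivity)
    rw [Real.log_inv, Real.log_exp] at hlog
    have h1 : t * Real.exp (-t) ≤ 1 - Real.exp (-t) := by
      calc t * Real.exp (-t) ≤ ((Real.exp (-t))⁻¹ - 1) * Real.exp (-t) := by
            apply mul_le_mul_of_nonneg_right ?_ hs0.le
            linarith only [hlog]
        _ = 1 - Real.exp (-t) := by field_simp
    nlinarith only [h1, mul_pos hs0 (by linarith only [hs1] : (0:ℝ) < 1 - Real.exp (-t))]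
  have hXpos : (0:ℝ) < (1 - Real.exp (-t) ^ 2) ^ (-(n : ℝ) / 2) :=
    Real.rpow_pos_of_pos hu0' _
  have hsn : Real.exp (-t) ^ n = Real.exp (-t) ^ (n - 1) * Real.exp (-t) := by
    rw [← pow_succ]
    congr 1
    omega
  have hstep : t * Real.exp (-t) ^ n *
        ((1 - Real.exp (-t) ^ 2) ^ (-(n : ℝ) / 2) * (1 - Real.exp (-t) ^ 2)⁻¹)
      ≤ Real.exp (-t) ^ (n - 1) * (1 - Real.exp (-t) ^ 2) ^ (-(n : ℝ) / 2) := by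
    have h1 : t * Real.exp (-t) * (1 - Real.exp (-t) ^ 2)⁻¹ ≤ 1 := by
      calc t * Real.exp (-t) * (1 - Real.exp (-t) ^ 2)⁻¹
          ≤ (1 - Real.exp (-t) ^ 2) * (1 - Real.exp (-t) ^ 2)⁻¹ :=
            mul_le_mul_of_nonneg_right hts (inv_nonneg.mpr hu0'.le)
        _ = 1 := mul_inv_cancel₀ hu0'.ne'
    calc t * Real.exp (-t) ^ n *
          ((1 - Real.exp (-t) ^ 2) ^ (-(n : ℝ) / 2) * (1 - Real.exp (-t) ^ 2)⁻¹)
        = (t * Real.exp (-t) * (1 - Real.exp (-t) ^ 2)⁻¹) *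
            (Real.exp (-t) ^ (n - 1) * (1 - Real.exp (-t) ^ 2) ^ (-(n : ℝ) / 2)) := by
          rw [hsn]; ring
      _ ≤ 1 * (Real.exp (-t) ^ (n - 1) * (1 - Real.exp (-t) ^ 2) ^ (-(n : ℝ) / 2)) :=
          mul_le_mul_of_nonneg_right h1 (by positivity)
      _ = _ := one_mul _
  set cn : ℝ := (n : ℝ) / Real.pi ^ ((n : ℝ) / 2) with hcn_def
  set G : ℝ := Real.exp (‖y‖ ^ 2 - ‖x‖ ^ 2) with hG
  set Ed : ℝ := Real.exp (-(‖yPerp n x y‖ ^ 2 + (q - Real.exp (-t) * ‖x‖) ^ 2) /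
      (1 - Real.exp (-t) ^ 2)) with hEd
  have hG0 : 0 ≤ G := (Real.exp_pos _).le
  have hEd0 : 0 ≤ Ed := (Real.exp_pos _).le
  simp only [minTerm]
  calc K1 n t x y
      = cn * (t * Real.exp (-t) ^ n *
          ((1 - Real.exp (-t) ^ 2) ^ (-(n : ℝ) / 2) * (1 - Real.exp (-t) ^ 2)⁻¹)) * Ed * G := by
        simp only [K1]
        rw [he2, hen, hsplitpow, hEd, hdecomp (Real.exp (-t))]
        ring
    _ ≤ cn * (Real.exp (-t) ^ (n - 1) * (1 - Real.exp (-t) ^ 2) ^ (-(n : ℝ) / 2)) * Ed * G := by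
        apply mul_le_mul_of_nonneg_right ?_ hG0
        apply mul_le_mul_of_nonneg_right ?_ hEd0
        exact mul_le_mul_of_nonneg_left hstep hcn.le
    _ = cn * G * (Real.exp (-t) ^ (n - 1) * (1 - Real.exp (-t) ^ 2) ^ (-(n : ℝ) / 2) * Ed) := by
        ring
    _ ≤ cn * G * (((n.factorial : ℝ) * 4 ^ (2 * n) * 3 ^ n) *
          (‖x‖ ^ ((1 : ℝ) - n)
          + Real.exp (-‖yPerp n x y‖ ^ 2) * (‖y‖ / ‖x‖) ^ ((n : ℝ) - 1) * ‖x‖ *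
              (if ‖y‖ ≤ 2 * ‖x‖ then (1:ℝ) else 0)
          + (if ‖yPerp n x y‖ = 0 then (1 + ‖x‖) ^ n else
              min ((1 + ‖x‖) ^ n) ((‖x‖ * (‖yPerp n x y‖ / ‖y‖)) ^ (-(n : ℝ)))))) := by
        apply mul_le_mul_of_nonneg_left ?_ (by positivity)
        exact hmaster
    _ = cn * ((n.factorial : ℝ) * 4 ^ (2 * n) * 3 ^ n) * G *
          (‖x‖ ^ ((1 : ℝ) - n)
          + Real.exp (-‖yPerp n x y‖ ^ 2) * (‖y‖ / ‖x‖) ^ ((n : ℝ) - 1) * ‖x‖ *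
              (if ‖y‖ ≤ 2 * ‖x‖ then (1:ℝ) else 0)
          + (if ‖yPerp n x y‖ = 0 then (1 + ‖x‖) ^ n else
              min ((1 + ‖x‖) ^ n) ((‖x‖ * (‖yPerp n x y‖ / ‖y‖)) ^ (-(n : ℝ))))) := by
        ring
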